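/- arXiv:2206.09254 — 2 statements merged into one kernel-verified Lean document; each statement's English description precedes it below -/
import Mathlib

section
/- Let t ↦ π^t be a differentiable trajectory in Δ°(A₁) × Δ°(A₂) following the replicator–mutator dynamics with mutation parameter μ > 0 and reference strategies c_i ∈ Δ°(A_i), let π^μ be a stationary point of these dynamics, and set ξ = min_{i∈{1,2}, a_i∈A_i} c_i(a_i)/π_i^μ(a_i). Then for all t, d/dt KL(π^μ, π^t) ≤ −μ ξ KL(π^μ, π^t). -/
open Finset

noncomputable section

variable {A1 A2 : Type*}

/-- Expected utility of the strategy profile `(p1, p2)` under utility function `u`. -/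
def eV [Fintype A1] [Fintype A2] (u : A1 → A2 → ℝ) (p1 : A1 → ℝ) (p2 : A2 → ℝ) : ℝ :=
  ∑ a1, ∑ a2, p1 a1 * p2 a2 * u a1 a2

/-- Conditional expected utility of action `a1` for player 1. -/
def cV1 [Fintype A2] (u : A1 → A2 → ℝ) (p2 : A2 → ℝ) (a1 : A1) : ℝ :=
  ∑ a2, p2 a2 * u a1 a2

/-- Conditional expected utility of action `a2` for player 2. -/
def cV2 [Fintype A1] (u : A1 → A2 → ℝ) (p1 : A1 → ℝ) (a2 : A2) : ℝ :=
  ∑ a1, p1 a1 * u a1 a2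

/-- Kullback–Leibler divergence (with the convention `0 ln 0 = 0`,
which holds since `Real.log 0 = 0` in Lean). -/
def KLd {A : Type*} [Fintype A] (p q : A → ℝ) : ℝ :=
  ∑ a, p a * Real.log (p a / q a)

/-- Bregman divergence associated with a differentiable function `ψ`. -/
def breg {A : Type*} [Fintype A] (ψ : (A → ℝ) → ℝ) (x y : A → ℝ) : ℝ :=
  ψ x - ψ y - fderiv ℝ ψ y (x - y)

/-- Euclidean inner product on `A → ℝ`. -/
def ip {A : Type*} [Fintype A] (z p : A → ℝ) : ℝ := ∑ a, z a * p a

/-! Differentiating, `d/dt KL(π^μ, π) = -Σᵢ Σₐ π^μ_i π̇_i / π_i`. After inserting the dynamics,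
subtracting player `i`'s stationarity equations weighted by `π_i / π^μ_i` leaves
`⟨π^μ_i - π_i, q_i^π - q_i^{π^μ}⟩ + μ Σₐ c_i (π^μ_i - π_i)² / (π^μ_i π_i)`. The payoff pairings
of the two players cancel since the game is zero-sum, and as `c_i ≥ ξ π^μ_i` the mutation term
dominates `μ ξ Σₐ (π^μ_i - π_i)² / π_i`, the χ²-divergence, which bounds `KL(π^μ_i, π_i)` from
above by `ln x ≤ x - 1`. -/

lemma eV_eq_sum_mul_cV1 [Fintype A1] [Fintype A2] (u : A1 → A2 → ℝ) (p : A1 → ℝ)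
    (q : A2 → ℝ) : eV u p q = ∑ a, p a * cV1 u q a := by
  simp [eV, cV1, mul_sum, mul_assoc]

lemma eV_eq_sum_mul_cV2 [Fintype A1] [Fintype A2] (u : A1 → A2 → ℝ) (p : A1 → ℝ)
    (q : A2 → ℝ) : eV u p q = ∑ b, q b * cV2 u p b := by
  simp only [eV, cV2, mul_sum]
  rw [sum_comm]
  exact sum_congr rfl fun _ _ => sum_congr rfl fun _ _ => by ring

/-- In a zero-sum game, `⟨x - y, q(y) - q(x)⟩` summed over both players vanishes, because both
summands equal `±u₁(x₁ - y₁, y₂ - x₂)`. -/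
lemma sum_sub_mul_cV_sub_add_eq_zero [Fintype A1] [Fintype A2] {u1 u2 : A1 → A2 → ℝ}
    (hzs : ∀ a1 a2, u2 a1 a2 = -u1 a1 a2) (x1 y1 : A1 → ℝ) (x2 y2 : A2 → ℝ) :
    ∑ a, (x1 a - y1 a) * (cV1 u1 y2 a - cV1 u1 x2 a)
      + ∑ b, (x2 b - y2 b) * (cV2 u2 y1 b - cV2 u2 x1 b) = 0 := by
  simp only [cV1, cV2, hzs, ← sum_sub_distrib, mul_sum]
  rw [sum_comm (f := fun b a => _), ← sum_add_distrib]
  exact sum_eq_zero fun _ _ => by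
    rw [← sum_add_distrib]
    exact sum_eq_zero fun _ _ => by ring

lemma pos_of_rmd_stationary {μ p c g : ℝ} (hμ : 0 < μ) (hc : 0 < c) (hp : 0 ≤ p)
    (hst : p * g + μ * (c - p) = 0) : 0 < p := by
  refine hp.lt_of_ne fun h => ?_
  subst h
  simp only [zero_mul, zero_add, sub_zero, mul_eq_zero] at hst
  exact hst.elim hμ.ne' hc.ne'

lemma hasDerivAt_KLd {A : Type*} [Fintype A] {p : A → ℝ} {π : ℝ → A → ℝ} {D : A → ℝ} {t : ℝ}
    (hπ : ∀ a, π t a ≠ 0) (hD : ∀ a, HasDerivAt (fun s => π s a) (D a) t) :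
    HasDerivAt (fun s => KLd p (π s)) (-∑ a, p a * D a / π t a) t := by
  have hterm (a : A) :
      HasDerivAt (fun s => p a * Real.log (p a / π s a)) (-(p a * D a / π t a)) t := by
    have hlog := (((hD a).log (hπ a)).const_mul (p a)).const_sub (p a * Real.log (p a))
    refine (hlog.congr_deriv (by ring)).congr_of_eventuallyEq ?_
    filter_upwards [(hD a).continuousAt.eventually_ne (hπ a)] with s hs
    by_cases hp : p a = 0
    · simp [hp]
    · rw [Real.log_div hp hs]
      ring
  simpa [KLd, sum_neg_distrib] using HasDerivAt.fun_sum fun a _ => hterm a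

lemma sum_mul_rmd_div_eq {A : Type*} [Fintype A] {μ : ℝ} {c p pμ q qμ : A → ℝ}
    (hc : ∑ a, c a = 1) (hp : ∑ a, p a = 1) (hpμ : ∑ a, pμ a = 1)
    (hp0 : ∀ a, p a ≠ 0) (hpμ0 : ∀ a, pμ a ≠ 0)
    (hst : ∀ a, pμ a * (qμ a - ∑ b, pμ b * qμ b) + μ * (c a - pμ a) = 0) :
    ∑ a, pμ a * (p a * (q a - ∑ b, p b * q b) + μ * (c a - p a)) / p a
      = ∑ a, (pμ a - p a) * (q a - qμ a)
        + μ * ∑ a, c a * (pμ a - p a) ^ 2 / (pμ a * p a) := by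
  set v := ∑ b, p b * q b
  set vμ := ∑ b, pμ b * qμ b
  have hterm (a : A) : pμ a * (p a * (q a - v) + μ * (c a - p a)) / p a
      = (pμ a - p a) * (q a - qμ a) + μ * (c a * (pμ a - p a) ^ 2 / (pμ a * p a))
        + (pμ a * qμ a - vμ * p a) + (p a * q a - v * pμ a) + μ * (2 * c a - pμ a - p a)
        - p a / pμ a * (pμ a * (qμ a - vμ) + μ * (c a - pμ a)) := by
    field_simp [hp0 a, hpμ0 a]
    ring
  simp only [hterm, hst, mul_zero, sub_zero, sum_add_distrib, sum_sub_distrib,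
    ← mul_sum, hc, hp, hpμ]
  ring

lemma mul_log_div_le {x y : ℝ} (hx : 0 ≤ x) (hy : 0 < y) :
    x * Real.log (x / y) ≤ (x - y) ^ 2 / y + (x - y) := by
  rcases hx.eq_or_lt with rfl | hx
  · simp [sq, hy.ne']
  · calc x * Real.log (x / y) ≤ x * (x / y - 1) :=
          mul_le_mul_of_nonneg_left (Real.log_le_sub_one_of_pos (div_pos hx hy)) hx.le
      _ = (x - y) ^ 2 / y + (x - y) := by field_simp; ring

lemma KLd_le_sum_sq_div {A : Type*} [Fintype A] {p q : A → ℝ} (hp : ∀ a, 0 ≤ p a)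
    (hq : ∀ a, 0 < q a) (hsum : ∑ a, p a = ∑ a, q a) :
    KLd p q ≤ ∑ a, (p a - q a) ^ 2 / q a :=
  calc KLd p q ≤ ∑ a, ((p a - q a) ^ 2 / q a + (p a - q a)) :=
        sum_le_sum fun a _ => mul_log_div_le (hp a) (hq a)
    _ = ∑ a, (p a - q a) ^ 2 / q a := by
        rw [sum_add_distrib, sum_sub_distrib, hsum, sub_self, add_zero]

lemma mul_KLd_le_sum_mul_sq_div {A : Type*} [Fintype A] {ξ : ℝ} {c p pμ : A → ℝ}
    (hξ0 : 0 ≤ ξ) (hξ : ∀ a, ξ ≤ c a / pμ a) (hp : ∀ a, 0 < p a) (hpμ : ∀ a, 0 < pμ a)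
    (hsum : ∑ a, pμ a = ∑ a, p a) :
    ξ * KLd pμ p ≤ ∑ a, c a * (pμ a - p a) ^ 2 / (pμ a * p a) :=
  calc ξ * KLd pμ p ≤ ξ * ∑ a, (pμ a - p a) ^ 2 / p a :=
        mul_le_mul_of_nonneg_left (KLd_le_sum_sq_div (fun a => (hpμ a).le) hp hsum) hξ0
    _ = ∑ a, ξ * ((pμ a - p a) ^ 2 / p a) := mul_sum _ _ _
    _ ≤ ∑ a, c a / pμ a * ((pμ a - p a) ^ 2 / p a) := sum_le_sum fun a _ =>
        mul_le_mul_of_nonneg_right (hξ a) (div_nonneg (sq_nonneg _) (hp a).le)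
    _ = ∑ a, c a * (pμ a - p a) ^ 2 / (pμ a * p a) := by
        refine sum_congr rfl fun a _ => ?_
        field_simp

/-- **Theorem 2, second part.** Along a differentiable full-support trajectory
of the replicator–mutator dynamics, with `π^μ` a stationary point and
`ξ = min_{i,a_i} c_i(a_i)/π_i^μ(a_i)`, we have `d/dt KL(π^μ, π^t) ≤ −μ ξ KL(π^μ, π^t)`. -/
theorem rmd_kl_derivative_bound
    [Fintype A1] [Fintype A2] [Nonempty A1] [Nonempty A2]
    (u1 u2 : A1 → A2 → ℝ) (hzs : ∀ a1 a2, u2 a1 a2 = -u1 a1 a2)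
    (μ : ℝ) (hμ : 0 < μ)
    (c1 : A1 → ℝ) (c2 : A2 → ℝ)
    (hc1 : c1 ∈ stdSimplex ℝ A1) (hc1pos : ∀ a, 0 < c1 a)
    (hc2 : c2 ∈ stdSimplex ℝ A2) (hc2pos : ∀ a, 0 < c2 a)
    (π1 : ℝ → A1 → ℝ) (π2 : ℝ → A2 → ℝ)
    (hmem1 : ∀ t, π1 t ∈ stdSimplex ℝ A1) (hpos1 : ∀ t a, 0 < π1 t a)
    (hmem2 : ∀ t, π2 t ∈ stdSimplex ℝ A2) (hpos2 : ∀ t a, 0 < π2 t a)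
    (hrmd1 : ∀ t a, HasDerivAt (fun s => π1 s a)
      (π1 t a * (cV1 u1 (π2 t) a - eV u1 (π1 t) (π2 t)) + μ * (c1 a - π1 t a)) t)
    (hrmd2 : ∀ t a, HasDerivAt (fun s => π2 s a)
      (π2 t a * (cV2 u2 (π1 t) a - eV u2 (π1 t) (π2 t)) + μ * (c2 a - π2 t a)) t)
    (π1μ : A1 → ℝ) (π2μ : A2 → ℝ)
    (hπ1μ : π1μ ∈ stdSimplex ℝ A1) (hπ2μ : π2μ ∈ stdSimplex ℝ A2)
    (hst1 : ∀ a, π1μ a * (cV1 u1 π2μ a - eV u1 π1μ π2μ) + μ * (c1 a - π1μ a) = 0)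
    (hst2 : ∀ a, π2μ a * (cV2 u2 π1μ a - eV u2 π1μ π2μ) + μ * (c2 a - π2μ a) = 0)
    (ξ : ℝ)
    (hξ : ξ = min (Finset.univ.inf' Finset.univ_nonempty fun a => c1 a / π1μ a)
                  (Finset.univ.inf' Finset.univ_nonempty fun a => c2 a / π2μ a)) :
    ∀ t, deriv (fun s => KLd π1μ (π1 s) + KLd π2μ (π2 s)) t ≤
      -μ * ξ * (KLd π1μ (π1 t) + KLd π2μ (π2 t)) := by
  intro t
  simp only [eV_eq_sum_mul_cV1 u1, eV_eq_sum_mul_cV2 u2] at hrmd1 hrmd2 hst1 hst2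
  have hπ1μ0 (a : A1) : 0 < π1μ a := pos_of_rmd_stationary hμ (hc1pos a) (hπ1μ.1 a) (hst1 a)
  have hπ2μ0 (b : A2) : 0 < π2μ b := pos_of_rmd_stationary hμ (hc2pos b) (hπ2μ.1 b) (hst2 b)
  have hξ1 (a : A1) : ξ ≤ c1 a / π1μ a := hξ ▸ (min_le_left _ _).trans (inf'_le _ (mem_univ a))
  have hξ2 (b : A2) : ξ ≤ c2 b / π2μ b := hξ ▸ (min_le_right _ _).trans (inf'_le _ (mem_univ b))
  have hξ0 : 0 ≤ ξ := hξ ▸ le_min (le_inf' _ _ fun a _ => (div_pos (hc1pos a) (hπ1μ0 a)).le)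
    (le_inf' _ _ fun b _ => (div_pos (hc2pos b) (hπ2μ0 b)).le)
  have hKL1 := mul_KLd_le_sum_mul_sq_div hξ0 hξ1 (hpos1 t) hπ1μ0 (hπ1μ.2.trans (hmem1 t).2.symm)
  have hKL2 := mul_KLd_le_sum_mul_sq_div hξ0 hξ2 (hpos2 t) hπ2μ0 (hπ2μ.2.trans (hmem2 t).2.symm)
  rw [((hasDerivAt_KLd (fun a => (hpos1 t a).ne') (hrmd1 t)).fun_add
      (hasDerivAt_KLd (fun b => (hpos2 t b).ne') (hrmd2 t))).deriv,
    sum_mul_rmd_div_eq hc1.2 (hmem1 t).2 hπ1μ.2 (fun a => (hpos1 t a).ne')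
      (fun a => (hπ1μ0 a).ne') hst1,
    sum_mul_rmd_div_eq hc2.2 (hmem2 t).2 hπ2μ.2 (fun b => (hpos2 t b).ne')
      (fun b => (hπ2μ0 b).ne') hst2]
  have hgame := sum_sub_mul_cV_sub_add_eq_zero hzs π1μ (π1 t) π2μ (π2 t)
  linarith [mul_le_mul_of_nonneg_left (add_le_add hKL1 hKL2) hμ.le]
end
end

section
/- Let t ↦ (π^t, z^t) be a continuous-time M-FTRL trajectory with strictly convex, continuously differentiable regularizers ψ₁, ψ₂, such that each π_i^t has full support and t ↦ π_i^t is differentiable. Then for every fixed profile π ∈ Δ(A₁) × Δ(A₂), the map t ↦ D_ψ(π, π^t) is differentiable and d/dt D_ψ(π, π^t) = Σ_{i=1}^{2} v_i^{π_i^t, π_{−i}} + 2μ − μ Σ_{i=1}^{2} Σ_{a_i∈A_i} c_i(a_i) π_i(a_i)/π_i^t(a_i). -/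
/-!
Since `π_i^t` maximises `⟨z_i^t, ·⟩ - ψ_i` at an interior point of the simplex, `∇ψ_i(π_i^t)` agrees
with `z_i^t` on directions summing to zero, so
`D_ψ(π_i, π_i^t) = ψ_i(π_i) - ψ_i(π_i^t) - ⟨z_i^t, π_i - π_i^t⟩`. For the same reason
`d/dt ψ_i(π_i^t) = ⟨z_i^t, d/dt π_i^t⟩`, which cancels in the product rule and leaves
`d/dt D_ψ(π_i, π_i^t) = -⟨d/dt z_i^t, π_i - π_i^t⟩`. Inserting the M-FTRL dynamics, the payoff
terms combine through the zero-sum property and each mutation term gives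
`μ - μ Σ_a c_i(a) π_i(a) / π_i^t(a)`.
-/

open Finset

noncomputable section

variable {A1 A2 : Type*}

open Filter Topology

section Strategies

variable {A : Type*} [Fintype A]

theorem sum_sub_eq_zero_of_mem_stdSimplex {p q : A → ℝ} (hp : p ∈ stdSimplex ℝ A)
    (hq : q ∈ stdSimplex ℝ A) : ∑ a, (q - p) a = 0 := by
  simp [Finset.sum_sub_distrib, hp.2, hq.2]

theorem eventually_add_smul_mem_stdSimplex {p v : A → ℝ} (hp : p ∈ stdSimplex ℝ A)
    (hpos : ∀ a, 0 < p a) (hv : ∑ a, v a = 0) :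
    ∀ᶠ s in 𝓝 (0 : ℝ), p + s • v ∈ stdSimplex ℝ A := by
  have hcoord : ∀ᶠ s in 𝓝 (0 : ℝ), ∀ a, 0 < p a + s * v a := by
    refine eventually_all.mpr fun a => Tendsto.eventually_const_lt (hpos a) ?_
    have hcont : Continuous fun s : ℝ => p a + s * v a := by fun_prop
    simpa using hcont.tendsto 0
  filter_upwards [hcoord] with s hs
  exact ⟨fun a => (hs a).le, by simp [Finset.sum_add_distrib, ← Finset.mul_sum, hp.2, hv]⟩

theorem mem_posTangentConeAt_stdSimplex {p v : A → ℝ} (hp : p ∈ stdSimplex ℝ A)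
    (hpos : ∀ a, 0 < p a) (hv : ∑ a, v a = 0) :
    v ∈ posTangentConeAt (stdSimplex ℝ A) p :=
  mem_posTangentConeAt_of_frequently_mem
    ((eventually_add_smul_mem_stdSimplex hp hpos hv).filter_mono nhdsWithin_le_nhds).frequently

theorem hasFDerivAt_ip (z p : A → ℝ) :
    HasFDerivAt (ip z) (∑ a, z a • ContinuousLinearMap.proj (R := ℝ) (φ := fun _ : A => ℝ) a) p :=
  HasFDerivAt.fun_sum fun a _ => (hasFDerivAt_apply a p).const_mul (z a)

theorem HasDerivAt.ip {x y : ℝ → A → ℝ} {x' y' : A → ℝ} {t : ℝ} (hx : HasDerivAt x x' t)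
    (hy : HasDerivAt y y' t) :
    HasDerivAt (fun s => ip (x s) (y s)) (ip x' (y t) + ip (x t) y') t := by
  have h := HasDerivAt.fun_sum (u := Finset.univ) fun a _ =>
    (hasDerivAt_pi.mp hx a).fun_mul (hasDerivAt_pi.mp hy a)
  simpa only [_root_.ip, Finset.sum_add_distrib] using h

theorem fderiv_apply_eq_ip_of_isMaxOn {ψ : (A → ℝ) → ℝ} {z p v : A → ℝ}
    (hψ : DifferentiableAt ℝ ψ p) (hp : p ∈ stdSimplex ℝ A) (hpos : ∀ a, 0 < p a)
    (hmax : IsMaxOn (fun q => ip z q - ψ q) (stdSimplex ℝ A) p) (hv : ∑ a, v a = 0) :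
    fderiv ℝ ψ p v = ip z v := by
  have hv' : ∑ a, (-v) a = 0 := by simp [hv]
  have h := hmax.localize.hasFDerivWithinAt_eq_zero
    ((hasFDerivAt_ip z p).sub hψ.hasFDerivAt).hasFDerivWithinAt
    (mem_posTangentConeAt_stdSimplex hp hpos hv) (mem_posTangentConeAt_stdSimplex hp hpos hv')
  simp only [sub_apply, _root_.sum_apply, smul_apply, ContinuousLinearMap.proj_apply,
    smul_eq_mul] at h
  simp only [ip]
  linarith

theorem breg_eq_of_isMaxOn {ψ : (A → ℝ) → ℝ} {z p q : A → ℝ}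
    (hψ : DifferentiableAt ℝ ψ p) (hp : p ∈ stdSimplex ℝ A) (hpos : ∀ a, 0 < p a)
    (hmax : IsMaxOn (fun q => ip z q - ψ q) (stdSimplex ℝ A) p) (hq : q ∈ stdSimplex ℝ A) :
    breg ψ q p = ψ q - ψ p - ip z (q - p) := by
  rw [breg, fderiv_apply_eq_ip_of_isMaxOn hψ hp hpos hmax
    (sum_sub_eq_zero_of_mem_stdSimplex hp hq)]

theorem hasDerivAt_breg_of_isMaxOn {ψ : (A → ℝ) → ℝ} (hψ : Differentiable ℝ ψ)
    {z π : ℝ → A → ℝ} {z' π' q : A → ℝ} {t : ℝ}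
    (hmem : ∀ s, π s ∈ stdSimplex ℝ A) (hpos : ∀ s a, 0 < π s a)
    (hmax : ∀ s, IsMaxOn (fun p => ip (z s) p - ψ p) (stdSimplex ℝ A) (π s))
    (hz : HasDerivAt z z' t) (hπ : HasDerivAt π π' t) (hq : q ∈ stdSimplex ℝ A) :
    HasDerivAt (fun s => breg ψ q (π s)) (-ip z' (q - π t)) t := by
  have hbreg : (fun s => breg ψ q (π s)) = fun s => ψ q - ψ (π s) - ip (z s) (q - π s) :=
    funext fun s => breg_eq_of_isMaxOn (hψ _) (hmem s) (hpos s) (hmax s) hq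
  have hπ'sum : ∑ a, π' a = 0 := by
    have h := HasDerivAt.fun_sum (u := Finset.univ) fun a _ => hasDerivAt_pi.mp hπ a
    rw [show (fun s => ∑ a, π s a) = fun _ => 1 from funext fun s => (hmem s).2] at h
    exact h.unique (hasDerivAt_const t 1)
  have hψπ : HasDerivAt (fun s => ψ (π s)) (ip (z t) π') t := by
    rw [← fderiv_apply_eq_ip_of_isMaxOn (hψ _) (hmem t) (hpos t) (hmax t) hπ'sum]
    exact (hψ _).hasFDerivAt.comp_hasDerivAt t hπ
  have h := ((hasDerivAt_const t (ψ q)).fun_sub hψπ).fun_sub (hz.ip (hπ.const_sub q))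
  rw [hbreg]
  refine h.congr_deriv ?_
  simp only [ip, Pi.neg_apply, mul_neg, Finset.sum_neg_distrib]
  ring

theorem ip_add_mutation_sub (μ : ℝ) {g c p r : A → ℝ}
    (hc : c ∈ stdSimplex ℝ A) (hp : p ∈ stdSimplex ℝ A) (hpos : ∀ a, 0 < p a)
    (hr : r ∈ stdSimplex ℝ A) :
    ip (fun a => g a + μ / p a * (c a - p a)) (r - p)
      = ip g r - ip g p + μ * ∑ a, c a * r a / p a - μ := by
  have hterm : ∀ a, (g a + μ / p a * (c a - p a)) * (r - p) a
      = g a * r a - g a * p a + μ * (c a * r a / p a) - μ * c a - μ * r a + μ * p a := by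
    intro a
    have := (hpos a).ne'
    simp only [Pi.sub_apply]
    field_simp
    ring
  simp only [ip, hterm, Finset.sum_add_distrib, Finset.sum_sub_distrib, ← Finset.mul_sum,
    hc.2, hr.2, hp.2]
  ring

end Strategies

section Payoffs

variable [Fintype A1] [Fintype A2]

theorem ip_cV1 (u : A1 → A2 → ℝ) (p1 : A1 → ℝ) (p2 : A2 → ℝ) :
    ip (cV1 u p2) p1 = eV u p1 p2 := by
  simp only [ip, cV1, eV, Finset.sum_mul]
  exact Finset.sum_congr rfl fun _ _ => Finset.sum_congr rfl fun _ _ => by ring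

theorem ip_cV2 (u : A1 → A2 → ℝ) (p1 : A1 → ℝ) (p2 : A2 → ℝ) :
    ip (cV2 u p1) p2 = eV u p1 p2 := by
  simp only [ip, cV2, eV, Finset.sum_mul]
  rw [Finset.sum_comm]
  exact Finset.sum_congr rfl fun _ _ => Finset.sum_congr rfl fun _ _ => by ring

theorem eV_eq_neg_of_zeroSum {u1 u2 : A1 → A2 → ℝ} (hzs : ∀ a1 a2, u2 a1 a2 = -u1 a1 a2)
    (p1 : A1 → ℝ) (p2 : A2 → ℝ) : eV u2 p1 p2 = -eV u1 p1 p2 := by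
  simp [eV, hzs]

end Payoffs

theorem mftrl_bregman_derivative_general
    [Fintype A1] [Fintype A2]
    (u1 u2 : A1 → A2 → ℝ) (hzs : ∀ a1 a2, u2 a1 a2 = -u1 a1 a2)
    (μ : ℝ)
    (c1 : A1 → ℝ) (c2 : A2 → ℝ)
    (hc1 : c1 ∈ stdSimplex ℝ A1)
    (hc2 : c2 ∈ stdSimplex ℝ A2)
    (ψ1 : (A1 → ℝ) → ℝ) (ψ2 : (A2 → ℝ) → ℝ)
    (hψ1d : ContDiff ℝ 1 ψ1)
    (hψ2d : ContDiff ℝ 1 ψ2)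
    (z1 : ℝ → A1 → ℝ) (z2 : ℝ → A2 → ℝ)
    (π1 : ℝ → A1 → ℝ) (π2 : ℝ → A2 → ℝ)
    (hmem1 : ∀ t, π1 t ∈ stdSimplex ℝ A1)
    (hmax1 : ∀ t, ∀ p ∈ stdSimplex ℝ A1,
      ip (z1 t) p - ψ1 p ≤ ip (z1 t) (π1 t) - ψ1 (π1 t))
    (hpos1 : ∀ t a, 0 < π1 t a)
    (hdiff1 : ∀ a, Differentiable ℝ fun t => π1 t a)
    (hmem2 : ∀ t, π2 t ∈ stdSimplex ℝ A2)
    (hmax2 : ∀ t, ∀ p ∈ stdSimplex ℝ A2,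
      ip (z2 t) p - ψ2 p ≤ ip (z2 t) (π2 t) - ψ2 (π2 t))
    (hpos2 : ∀ t a, 0 < π2 t a)
    (hdiff2 : ∀ a, Differentiable ℝ fun t => π2 t a)
    (hz1 : ∀ t a, HasDerivAt (fun s => z1 s a)
      (cV1 u1 (π2 t) a + μ / π1 t a * (c1 a - π1 t a)) t)
    (hz2 : ∀ t a, HasDerivAt (fun s => z2 s a)
      (cV2 u2 (π1 t) a + μ / π2 t a * (c2 a - π2 t a)) t)
    (π1f : A1 → ℝ) (π2f : A2 → ℝ)
    (hπ1f : π1f ∈ stdSimplex ℝ A1) (hπ2f : π2f ∈ stdSimplex ℝ A2) :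
    ∀ t, HasDerivAt (fun s => breg ψ1 π1f (π1 s) + breg ψ2 π2f (π2 s))
      ((eV u1 (π1 t) π2f + eV u2 π1f (π2 t)) + 2 * μ -
        μ * ((∑ a, c1 a * π1f a / π1 t a) + (∑ a, c2 a * π2f a / π2 t a))) t := by
  intro t
  have h1 := hasDerivAt_breg_of_isMaxOn (hψ1d.differentiable one_ne_zero) hmem1 hpos1
    (fun s => isMaxOn_iff.mpr (hmax1 s)) (hasDerivAt_pi.mpr (hz1 t))
    (hasDerivAt_pi.mpr fun a => (hdiff1 a t).hasDerivAt) hπ1f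
  have h2 := hasDerivAt_breg_of_isMaxOn (hψ2d.differentiable one_ne_zero) hmem2 hpos2
    (fun s => isMaxOn_iff.mpr (hmax2 s)) (hasDerivAt_pi.mpr (hz2 t))
    (hasDerivAt_pi.mpr fun a => (hdiff2 a t).hasDerivAt) hπ2f
  refine (h1.fun_add h2).congr_deriv ?_
  rw [ip_add_mutation_sub (g := cV1 u1 (π2 t)) μ hc1 (hmem1 t) (hpos1 t) hπ1f,
    ip_add_mutation_sub (g := cV2 u2 (π1 t)) μ hc2 (hmem2 t) (hpos2 t) hπ2f,
    ip_cV1, ip_cV1, ip_cV2, ip_cV2, eV_eq_neg_of_zeroSum hzs, eV_eq_neg_of_zeroSum hzs,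
    eV_eq_neg_of_zeroSum hzs]
  ring

/-- **Lemma 1.** Along a continuous-time M-FTRL trajectory with strictly convex,
continuously differentiable regularizers (and full-support, differentiable strategies),
for every fixed profile `π`, the Bregman divergence `D_ψ(π, π^t)` is differentiable in time with
`d/dt D_ψ(π, π^t) = Σ_i v_i^{π_i^t, π_{−i}} + 2μ − μ Σ_i Σ_{a_i} c_i(a_i) π_i(a_i)/π_i^t(a_i)`. -/
theorem mftrl_bregman_derivative
    [Fintype A1] [Fintype A2]
    (u1 u2 : A1 → A2 → ℝ) (hzs : ∀ a1 a2, u2 a1 a2 = -u1 a1 a2)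
    (μ : ℝ) (hμ : 0 < μ)
    (c1 : A1 → ℝ) (c2 : A2 → ℝ)
    (hc1 : c1 ∈ stdSimplex ℝ A1) (hc1pos : ∀ a, 0 < c1 a)
    (hc2 : c2 ∈ stdSimplex ℝ A2) (hc2pos : ∀ a, 0 < c2 a)
    (ψ1 : (A1 → ℝ) → ℝ) (ψ2 : (A2 → ℝ) → ℝ)
    (hψ1 : StrictConvexOn ℝ (stdSimplex ℝ A1) ψ1) (hψ1d : ContDiff ℝ 1 ψ1)
    (hψ2 : StrictConvexOn ℝ (stdSimplex ℝ A2) ψ2) (hψ2d : ContDiff ℝ 1 ψ2)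
    (z1 : ℝ → A1 → ℝ) (z2 : ℝ → A2 → ℝ)
    (π1 : ℝ → A1 → ℝ) (π2 : ℝ → A2 → ℝ)
    (hmem1 : ∀ t, π1 t ∈ stdSimplex ℝ A1)
    (hmax1 : ∀ t, ∀ p ∈ stdSimplex ℝ A1,
      ip (z1 t) p - ψ1 p ≤ ip (z1 t) (π1 t) - ψ1 (π1 t))
    (hpos1 : ∀ t a, 0 < π1 t a)
    (hdiff1 : ∀ a, Differentiable ℝ fun t => π1 t a)
    (hmem2 : ∀ t, π2 t ∈ stdSimplex ℝ A2)
    (hmax2 : ∀ t, ∀ p ∈ stdSimplex ℝ A2,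
      ip (z2 t) p - ψ2 p ≤ ip (z2 t) (π2 t) - ψ2 (π2 t))
    (hpos2 : ∀ t a, 0 < π2 t a)
    (hdiff2 : ∀ a, Differentiable ℝ fun t => π2 t a)
    (hz1 : ∀ t a, HasDerivAt (fun s => z1 s a)
      (cV1 u1 (π2 t) a + μ / π1 t a * (c1 a - π1 t a)) t)
    (hz2 : ∀ t a, HasDerivAt (fun s => z2 s a)
      (cV2 u2 (π1 t) a + μ / π2 t a * (c2 a - π2 t a)) t)
    (π1f : A1 → ℝ) (π2f : A2 → ℝ)
    (hπ1f : π1f ∈ stdSimplex ℝ A1) (hπ2f : π2f ∈ stdSimplex ℝ A2) :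
    ∀ t, HasDerivAt (fun s => breg ψ1 π1f (π1 s) + breg ψ2 π2f (π2 s))
      ((eV u1 (π1 t) π2f + eV u2 π1f (π2 t)) + 2 * μ -
        μ * ((∑ a, c1 a * π1f a / π1 t a) + (∑ a, c2 a * π2f a / π2 t a))) t :=
  mftrl_bregman_derivative_general u1 u2 hzs μ c1 c2 hc1 hc2 ψ1 ψ2 hψ1d hψ2d z1 z2 π1 π2 hmem1 hmax1
    hpos1 hdiff1 hmem2 hmax2 hpos2 hdiff2 hz1 hz2 π1f π2f hπ1f hπ2f
end
end
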